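/- (Tweedie's lemma, 1D version) Let p be a probability density on ℝ with finite first moment, and for α, σ > 0 define the convolved density p̃(y) = ∫ N(y | αx, σ²) p(x) dx. Suppose p̃ is differentiable with derivative obtained by differentiating under the integral sign. Then the posterior mean μ(y) = ∫ x · p(x|y) dx, where p(x|y) = N(y|αx,σ²)p(x)/p̃(y), satisfies μ(y) = (y + σ² · d/dy log p̃(y)) / α, at any y with p̃(y) > 0. -/

import Mathlib

/-! Write `f(x) = N(y | αx, σ²) p(x)`, so that `p̃(y) = ∫ f`. Differentiating under the integral
sign brings down the Gaussian score `(αx - y)/σ²`, whence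
`σ² p̃'(y) = α ∫ x f(x) dx - y p̃(y)`. Dividing by `p̃(y)` turns `∫ x f(x) dx` into `p̃(y) μ(y)`,
and solving for `μ(y)` gives the formula. -/

open MeasureTheory Real

section

variable {Ω : Type*} [MeasurableSpace Ω] {ν : Measure Ω}

theorem MeasureTheory.Integrable.mul_of_abs_mul {f g : Ω → ℝ} (hg : AEStronglyMeasurable g ν)
    (hf : AEStronglyMeasurable f ν) (h : Integrable (fun x => |g x| * f x) ν) :
    Integrable (fun x => g x * f x) ν :=
  h.mono (hg.mul hf) (ae_of_all _ fun x => by simp)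

theorem integral_mul_div_const (f g : Ω → ℝ) (z : ℝ) :
    ∫ x, g x * (f x / z) ∂ν = (∫ x, g x * f x ∂ν) / z := by
  simp_rw [mul_div_assoc']
  exact integral_div z _

theorem integral_affine_div_mul {f g : Ω → ℝ} (hf : Integrable f ν)
    (hgf : Integrable (fun x => g x * f x) ν) (a b c : ℝ) :
    ∫ x, (a * g x - b) / c * f x ∂ν = (a * ∫ x, g x * f x ∂ν - b * ∫ x, f x ∂ν) / c := by
  have hsplit : ∀ x, (a * g x - b) / c * f x = a / c * (g x * f x) - b / c * f x :=
    fun x => by ring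
  simp_rw [hsplit]
  rw [integral_sub (hgf.const_mul _) (hf.const_mul _), integral_const_mul, integral_const_mul]
  ring

end

theorem stmt2_general (α σ : ℝ) (hα : 0 < α) (hσ : 0 < σ)
    (p : ℝ → ℝ)
    (N : ℝ → ℝ → ℝ)
    (ptilde : ℝ → ℝ)
    (hptilde : ∀ y, ptilde y = ∫ x, N y (α * x) * p x)
    (hmoment : ∀ y, Integrable (fun x => |x| * (N y (α * x) * p x)))
    (hderiv : ∀ y, HasDerivAt ptilde
      (∫ x, ((α * x - y) / σ ^ 2) * (N y (α * x) * p x)) y)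
    (μpost : ℝ → ℝ)
    (hμ : ∀ y, μpost y = ∫ x, x * (N y (α * x) * p x / ptilde y)) :
    ∀ y, 0 < ptilde y →
      μpost y = (y + σ ^ 2 * (deriv (fun z => Real.log (ptilde z)) y)) / α := by
  intro y hy
  -- a non-integrable function has Bochner integral `0`, so `p̃(y) > 0` forces integrability
  have hf : Integrable fun x => N y (α * x) * p x := .of_integral_ne_zero (hptilde y ▸ hy.ne')
  have hxf : Integrable fun x => x * (N y (α * x) * p x) :=
    .mul_of_abs_mul aestronglyMeasurable_id hf.1 (hmoment y)
  have hscore : deriv (fun z => Real.log (ptilde z)) y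
      = (α * (∫ x, x * (N y (α * x) * p x)) - y * ptilde y) / σ ^ 2 / ptilde y := by
    rw [((hderiv y).log hy.ne').deriv, integral_affine_div_mul hf hxf, ← hptilde y]
  rw [hμ y, integral_mul_div_const, hscore]
  generalize ∫ x, x * (N y (α * x) * p x) = m
  field_simp
  ring

/-- Tweedie's lemma in 1D.  With `p̃(y) = ∫ N(y|αx,σ²) p(x) dx` and
posterior mean `μ(y) = ∫ x p(x|y) dx`, one has `μ(y) = (y + σ² (log p̃)'(y)) / α`
at any `y` with `p̃(y) > 0`, assuming differentiation under the integral sign. -/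
theorem stmt2 (α σ : ℝ) (hα : 0 < α) (hσ : 0 < σ)
    (p : ℝ → ℝ)
    (hp_nonneg : ∀ x, 0 ≤ p x)
    (hp_meas : Measurable p)
    (hp_int : ∫ x, p x = 1)
    (N : ℝ → ℝ → ℝ)
    (hN : ∀ y m, N y m = (2 * π * σ ^ 2) ^ (-(1 : ℝ) / 2) *
      Real.exp (-(y - m) ^ 2 / (2 * σ ^ 2)))
    (ptilde : ℝ → ℝ)
    (hptilde : ∀ y, ptilde y = ∫ x, N y (α * x) * p x)
    (hmoment : ∀ y, Integrable (fun x => |x| * (N y (α * x) * p x)))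
    (hderiv : ∀ y, HasDerivAt ptilde
      (∫ x, ((α * x - y) / σ ^ 2) * (N y (α * x) * p x)) y)
    (μpost : ℝ → ℝ)
    (hμ : ∀ y, μpost y = ∫ x, x * (N y (α * x) * p x / ptilde y)) :
    ∀ y, 0 < ptilde y →
      μpost y = (y + σ ^ 2 * (deriv (fun z => Real.log (ptilde z)) y)) / α :=
  stmt2_general α σ hα hσ p N ptilde hptilde hmoment hderiv μpost hμ
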